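/- arXiv:2107.06646 — 2 statements merged into one kernel-verified Lean document; each statement's English description precedes it below -/
import Mathlib

section
/- The path topology P on Minkowski space ℝ⁴, defined as the topology generated by the sets K(x, ε) = {x} ∪ {y : |y − x| < ε and Q(y−x) < 0} for x ∈ ℝ⁴ and ε > 0 together with Euclidean open sets, is strictly finer than the Euclidean topology on ℝ⁴. -/
open Topology TopologicalSpace

noncomputable section

/-- The Minkowski quadratic form of signature (+,−,−,−) on `ℝ⁴`. -/
def Q (v : EuclideanSpace ℝ (Fin 4)) : ℝ := v 0 ^ 2 - v 1 ^ 2 - v 2 ^ 2 - v 3 ^ 2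

/-- Bounded time-cone with vertex: `K(x, ε) = {x} ∪ {y : ‖y − x‖ < ε, Q(y−x) < 0}`. -/
def K (x : EuclideanSpace ℝ (Fin 4)) (ε : ℝ) : Set (EuclideanSpace ℝ (Fin 4)) :=
  {x} ∪ {y | ‖y - x‖ < ε ∧ Q (y - x) < 0}

/-- The path topology `P`: generated by the Euclidean open sets together with the
sets `K(x, ε)`. -/
def P : TopologicalSpace (EuclideanSpace ℝ (Fin 4)) :=
  generateFrom ({U | IsOpen U} ∪ {S | ∃ x, ∃ ε : ℝ, 0 < ε ∧ S = K x ε})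

/-- The path topology is strictly finer than the Euclidean topology on `ℝ⁴`. -/
theorem path_topology_strictly_finer :
    (∀ U : Set (EuclideanSpace ℝ (Fin 4)), IsOpen U → IsOpen[P] U) ∧
    (∃ U : Set (EuclideanSpace ℝ (Fin 4)), IsOpen[P] U ∧ ¬ IsOpen U) := by
  constructor
  · intro U hU
    exact GenerateOpen.basic U (Or.inl hU)
  · refine ⟨K 0 1, GenerateOpen.basic _ (Or.inr ⟨0, 1, one_pos, rfl⟩), ?_⟩
    intro h
    rw [Metric.isOpen_iff] at h
    obtain ⟨ε, hε, hball⟩ := h 0 (Or.inl rfl)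
    set y : EuclideanSpace ℝ (Fin 4) := EuclideanSpace.single 0 (ε / 2) with hy
    have hmem : y ∈ Metric.ball (0 : EuclideanSpace ℝ (Fin 4)) ε := by
      rw [Metric.mem_ball, dist_zero_right, hy, EuclideanSpace.norm_single]
      rw [Real.norm_eq_abs, abs_of_pos (by linarith)]
      linarith
    have := hball hmem
    rcases this with h0 | ⟨_, hQ⟩
    · have : y 0 = (0 : EuclideanSpace ℝ (Fin 4)) 0 := by rw [h0]
      simp [hy, EuclideanSpace.single_apply] at this
      linarith
    · have hy0 : (y - 0) 0 = ε / 2 := by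
        simp [hy, EuclideanSpace.single_apply]
      have hy1 : (y - 0) 1 = 0 := by simp [hy, EuclideanSpace.single_apply]
      have hy2 : (y - 0) 2 = 0 := by simp [hy, EuclideanSpace.single_apply]
      have hy3 : (y - 0) 3 = 0 := by simp [hy, EuclideanSpace.single_apply]
      rw [Q, hy0, hy1, hy2, hy3] at hQ
      nlinarith
end
end

section
/- In Minkowski space ℝ⁴ with the path topology P generated by Euclidean open sets together with the sets K(x, ε) = {x} ∪ {y : |y−x| < ε, Q(y−x) < 0}, every point has a countable neighbourhood basis (P is first countable), given by {K(x, 1/n) : n ∈ ℕ}. -/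
open Topology TopologicalSpace Filter

noncomputable section

/-!
Every generator of `P` containing `x` contains a cone `K x ε`: for a Euclidean open set because
`K x ε ⊆ {x} ∪ ball x ε`, and for a cone `K y δ ∋ x` with `x ≠ y` because `x` then lies in the
Euclidean open set `K y δ \ {y}`. Since the cones at `x` are themselves generators and are nested
in `ε`, they form a neighbourhood basis at `x`, and the radii `1 / n` are cofinal among all `ε > 0`.
-/

lemma K_mono (x : EuclideanSpace ℝ (Fin 4)) {ε ε' : ℝ} (h : ε ≤ ε') : K x ε ⊆ K x ε' :=
  Set.union_subset_union_right _ fun _ hy => ⟨hy.1.trans_le h, hy.2⟩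

lemma exists_K_subset_of_isOpen {U : Set (EuclideanSpace ℝ (Fin 4))} (hU : IsOpen U)
    {x : EuclideanSpace ℝ (Fin 4)} (hx : x ∈ U) : ∃ ε > 0, K x ε ⊆ U := by
  obtain ⟨ε, hε, hball⟩ := Metric.isOpen_iff.mp hU x hx
  refine ⟨ε, hε, ?_⟩
  rintro y (rfl | ⟨hy, -⟩)
  · exact hx
  · exact hball (mem_ball_iff_norm.mpr hy)

lemma isOpen_K_diff_vertex (x : EuclideanSpace ℝ (Fin 4)) (δ : ℝ) :
    IsOpen {y | ‖y - x‖ < δ ∧ Q (y - x) < 0} := by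
  have hQ : Continuous Q := by unfold Q; fun_prop
  exact (isOpen_lt (continuous_norm.comp (continuous_sub_right x)) continuous_const).inter
    (isOpen_lt (hQ.comp (continuous_sub_right x)) continuous_const)

lemma exists_K_subset_K {x y : EuclideanSpace ℝ (Fin 4)} {δ : ℝ} (hδ : 0 < δ) (hx : x ∈ K y δ) :
    ∃ ε > 0, K x ε ⊆ K y δ := by
  rcases hx with rfl | hx
  · exact ⟨δ, hδ, subset_rfl⟩
  · obtain ⟨ε, hε, hsub⟩ := exists_K_subset_of_isOpen (isOpen_K_diff_vertex y δ) hx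
    exact ⟨ε, hε, hsub.trans Set.subset_union_right⟩

lemma hasBasis_nhds_P (x : EuclideanSpace ℝ (Fin 4)) :
    (@nhds _ P x).HasBasis (fun ε : ℝ => 0 < ε) (K x) := by
  have hcones : (⨅ ε > 0, 𝓟 (K x ε)).HasBasis (fun ε : ℝ => 0 < ε) (K x) :=
    hasBasis_biInf_principal'
      (fun ε hε ε' hε' => ⟨min ε ε', lt_min hε hε', K_mono x (min_le_left _ _),
        K_mono x (min_le_right _ _)⟩)
      ⟨1, one_pos⟩
  convert hcones using 1
  refine le_antisymm ?_ ?_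
  · refine hcones.ge_iff.mpr fun ε hε => @IsOpen.mem_nhds _ P _ _ ?_ (Set.mem_union_left _ rfl)
    exact GenerateOpen.basic _ (Or.inr ⟨x, ε, hε, rfl⟩)
  · rw [P, nhds_generateFrom]
    refine le_iInf₂ fun s ⟨hxs, hs⟩ => le_principal_iff.mpr (hcones.mem_iff.mpr ?_)
    rcases hs with hs | ⟨y, δ, hδ, rfl⟩
    · exact exists_K_subset_of_isOpen hs hxs
    · exact exists_K_subset_K hδ hxs

/-- The path topology is first countable: `{K(x, 1/n) : 0 < n}` is a neighbourhood
basis at each point `x`. -/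
theorem path_topology_first_countable (x : EuclideanSpace ℝ (Fin 4)) :
    (@nhds _ P x).HasBasis (fun n : ℕ => 0 < n) (fun n : ℕ => K x (1 / n)) :=
  (hasBasis_nhds_P x).to_hasBasis
    (fun _ hε =>
      let ⟨n, hn⟩ := exists_nat_one_div_lt hε
      ⟨n + 1, n.succ_pos, K_mono x (by exact_mod_cast hn.le)⟩)
    (fun n hn => ⟨1 / n, by positivity, subset_rfl⟩)
end
end
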